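/- arXiv:2404.13650 — 2 statements merged into one kernel-verified Lean document; each statement's English description precedes it below -/
import Mathlib

section
/- (Theorem 3.2, coordinate form.) Let F : ℝ² → ℝ be a smooth function and let n(x,y) = (−F_x, −F_y, 1)/√(1 + F_x² + F_y²) be the upward unit normal (Gauss map) of the graph surface (x, y, F(x,y)). Suppose there exists k ∈ ℝ with k ≠ 0 such that n(x, y + t) = R_{kt}( n(x,y) ) for all (x,y) ∈ ℝ² and all t ∈ ℝ (strictly quasi-rotational Gauss map), where R_φ is the rotation of ℝ³ about the z-axis by angle φ. Then every point of ℝ² has an open neighborhood on which F(x,y) = C₁ e^{−kx} cos(ky + l) + C₂ for some real constants C₁, C₂, l (a surface congruent to some p_{k',c}). -/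
noncomputable section

private lemma polar' (p q : ℝ) : ∃ r θ : ℝ, r * Real.cos θ = p ∧ r * Real.sin θ = q := by
  refine ⟨‖(⟨p, q⟩ : ℂ)‖, Complex.arg ⟨p, q⟩, ?_, ?_⟩
  · simpa using congrArg Complex.re (Complex.norm_mul_cos_add_sin_mul_I ⟨p, q⟩)
  · simpa using congrArg Complex.im (Complex.norm_mul_cos_add_sin_mul_I ⟨p, q⟩)

private lemma const' {g : ℝ → ℝ} (h : ∀ x, HasDerivAt g 0 x) (x : ℝ) : g x = g 0 :=
  is_const_of_deriv_eq_zero (fun y => (h y).differentiableAt) (fun y => (h y).deriv) x 0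


/-- Rotation of ℝ³ about the z-axis by angle `φ`. -/
def Rz (φ : ℝ) (v : ℝ × ℝ × ℝ) : ℝ × ℝ × ℝ :=
  (v.1 * Real.cos φ - v.2.1 * Real.sin φ,
   v.1 * Real.sin φ + v.2.1 * Real.cos φ, v.2.2)

/-- Theorem 3.2 (coordinate form): if the upward Gauss map
`n = (−F_x, −F_y, 1)/√(1 + F_x² + F_y²)` of the graph of a smooth `F : ℝ² → ℝ` is
strictly quasi-rotational, i.e. `n(x, y + t) = R_{kt}(n(x,y))` for some `k ≠ 0`, then
locally `F(x,y) = C₁ e^{−kx} cos(ky + l) + C₂`. -/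
theorem stmt_17 (F : ℝ × ℝ → ℝ) (hF : ContDiff ℝ (⊤ : ℕ∞) F) (k : ℝ) (hk : k ≠ 0) :
    let n : ℝ → ℝ → ℝ × ℝ × ℝ := fun x y =>
      let Fx := deriv (fun s => F (s, y)) x
      let Fy := deriv (fun t => F (x, t)) y
      (Real.sqrt (1 + Fx ^ 2 + Fy ^ 2))⁻¹ • ((-Fx, -Fy, 1) : ℝ × ℝ × ℝ)
    (∀ x y t : ℝ, n x (y + t) = Rz (k * t) (n x y)) →
    ∀ x y : ℝ, ∃ V : Set (ℝ × ℝ), IsOpen V ∧ (x, y) ∈ V ∧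
      ∃ C₁ C₂ l : ℝ,
        ∀ q ∈ V, F q = C₁ * Real.exp (-(k * q.1)) * Real.cos (k * q.2 + l) + C₂ := by
  intro n hn x0 y0
  have hFd : Differentiable ℝ F := hF.differentiable (by simp)
  set D := fderiv ℝ F with hDdef
  have hF' : ContDiff ℝ (⊤ : ℕ∞) F := hF.of_le (by simp)
  have hDc : ContDiff ℝ (⊤ : ℕ∞) D := (contDiff_infty_iff_fderiv.mp hF').2
  set u : ℝ → ℝ → ℝ := fun x y => D (x, y) (1, 0) with hu
  set v : ℝ → ℝ → ℝ := fun x y => D (x, y) (0, 1) with hv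
  have hx : ∀ x y : ℝ, HasDerivAt (fun s => F (s, y)) (u x y) x := by
    intro x y
    have h1 : HasDerivAt (fun s : ℝ => (s, y)) ((1 : ℝ), (0 : ℝ)) x :=
      (hasDerivAt_id x).prodMk (hasDerivAt_const x y)
    exact ((hFd (x, y)).hasFDerivAt).comp_hasDerivAt x h1
  have hy : ∀ x y : ℝ, HasDerivAt (fun t => F (x, t)) (v x y) y := by
    intro x y
    have h1 : HasDerivAt (fun t : ℝ => (x, t)) ((0 : ℝ), (1 : ℝ)) y :=
      (hasDerivAt_const y x).prodMk (hasDerivAt_id y)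
    exact ((hFd (x, y)).hasFDerivAt).comp_hasDerivAt y h1
  have hneq : n = fun x y =>
      (Real.sqrt (1 + (u x y) ^ 2 + (v x y) ^ 2))⁻¹ •
        ((-(u x y), -(v x y), 1) : ℝ × ℝ × ℝ) := by
    funext x y
    show (Real.sqrt (1 + (deriv (fun s => F (s, y)) x) ^ 2 + (deriv (fun t => F (x, t)) y) ^ 2))⁻¹ •
        ((-(deriv (fun s => F (s, y)) x), -(deriv (fun t => F (x, t)) y), 1) : ℝ × ℝ × ℝ) = _
    rw [(hx x y).deriv, (hy x y).deriv]
  rw [hneq] at hn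
  -- step A: component equations
  have key : ∀ x y : ℝ, u x y = u x 0 * Real.cos (k * y) - v x 0 * Real.sin (k * y) ∧
      v x y = u x 0 * Real.sin (k * y) + v x 0 * Real.cos (k * y) := by
    intro x y
    have h := hn x 0 y
    simp only [Rz, zero_add, Prod.smul_mk, smul_eq_mul, Prod.mk.injEq] at h
    obtain ⟨h1, h2, h3⟩ := h
    have hs : ∀ y' : ℝ, 0 < Real.sqrt (1 + (u x y') ^ 2 + (v x y') ^ 2) := by
      intro y'; positivity
    have hss : Real.sqrt (1 + (u x y) ^ 2 + (v x y) ^ 2)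
        = Real.sqrt (1 + (u x 0) ^ 2 + (v x 0) ^ 2) := by
      rw [mul_one, mul_one, inv_inj] at h3
      exact h3
    rw [hss] at h1 h2
    have hne : (Real.sqrt (1 + (u x 0) ^ 2 + (v x 0) ^ 2)) ≠ 0 := (hs 0).ne'
    constructor
    · have h1' : (Real.sqrt (1 + (u x 0) ^ 2 + (v x 0) ^ 2))⁻¹ * (-u x y)
          = (Real.sqrt (1 + (u x 0) ^ 2 + (v x 0) ^ 2))⁻¹ *
            (-(u x 0 * Real.cos (k * y) - v x 0 * Real.sin (k * y))) := by
        rw [h1]; ring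
      have := mul_left_cancel₀ (inv_ne_zero hne) h1'
      linarith
    · have h2' : (Real.sqrt (1 + (u x 0) ^ 2 + (v x 0) ^ 2))⁻¹ * (-v x y)
          = (Real.sqrt (1 + (u x 0) ^ 2 + (v x 0) ^ 2))⁻¹ *
            (-(u x 0 * Real.sin (k * y) + v x 0 * Real.cos (k * y))) := by
        rw [h2]; ring
      have := mul_left_cancel₀ (inv_ne_zero hne) h2'
      linarith
  -- Step C: integrate in y
  have hFy : ∀ x y : ℝ, F (x, y) = F (x, 0) + (u x 0 / k) * (1 - Real.cos (k * y))
      + (v x 0 / k) * Real.sin (k * y) := by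
    intro x y
    have hg : ∀ y' : ℝ, HasDerivAt (fun y' => F (x, y') -
        ((u x 0 / k) * (1 - Real.cos (k * y')) + (v x 0 / k) * Real.sin (k * y'))) 0 y' := by
      intro y'
      have hky : HasDerivAt (fun y' : ℝ => k * y') k y' := by
        simpa using (hasDerivAt_id y').const_mul k
      have hc : HasDerivAt (fun y' => Real.cos (k * y')) (-Real.sin (k * y') * k) y' := hky.cos
      have hsn : HasDerivAt (fun y' => Real.sin (k * y')) (Real.cos (k * y') * k) y' := hky.sin
      have hder := (hy x y').sub (((((hasDerivAt_const y' (1 : ℝ)).sub hc).const_mul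
        (u x 0 / k))).add (hsn.const_mul (v x 0 / k)))
      have h0 : v x y' - ((u x 0 / k) * (0 - (-Real.sin (k * y') * k))
          + (v x 0 / k) * (Real.cos (k * y') * k)) = 0 := by
        rw [(key x y').2]; field_simp; ring
      rw [h0] at hder; exact hder
    have h := const' hg y
    simp only [Real.cos_zero, Real.sin_zero, mul_zero, mul_one, sub_self] at h
    linarith [h]
  -- differentiability of a and b
  have hA : Differentiable ℝ (fun x : ℝ => u x 0) := by
    have h1 : Differentiable ℝ (fun x : ℝ => D (x, 0)) :=
      (hDc.differentiable (by simp)).comp (differentiable_id.prodMk (differentiable_const 0))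
    exact h1.clm_apply (differentiable_const _)
  have hB : Differentiable ℝ (fun x : ℝ => v x 0) := by
    have h1 : Differentiable ℝ (fun x : ℝ => D (x, 0)) :=
      (hDc.differentiable (by simp)).comp (differentiable_id.prodMk (differentiable_const 0))
    exact h1.clm_apply (differentiable_const _)
  -- Step B: differentiate the identity in x
  have hAB : ∀ x y : ℝ, u x 0 * Real.cos (k * y) - v x 0 * Real.sin (k * y)
      = u x 0 + (deriv (fun x => u x 0) x / k) * (1 - Real.cos (k * y))
        + (deriv (fun x => v x 0) x / k) * Real.sin (k * y) := by
    intro x y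
    have hR : HasDerivAt (fun x => F (x, 0) + (u x 0 / k) * (1 - Real.cos (k * y))
        + (v x 0 / k) * Real.sin (k * y))
        (u x 0 + (deriv (fun x => u x 0) x / k) * (1 - Real.cos (k * y))
          + (deriv (fun x => v x 0) x / k) * Real.sin (k * y)) x :=
      ((hx x 0).add (((hA x).hasDerivAt.div_const k).mul_const _)).add
        (((hB x).hasDerivAt.div_const k).mul_const _)
    have hfun : (fun x => F (x, y)) = (fun x => F (x, 0) + (u x 0 / k) * (1 - Real.cos (k * y))
        + (v x 0 / k) * Real.sin (k * y)) := funext fun x => hFy x y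
    have hL : HasDerivAt (fun x => F (x, 0) + (u x 0 / k) * (1 - Real.cos (k * y))
        + (v x 0 / k) * Real.sin (k * y)) (u x y) x := hfun ▸ hx x y
    have := hR.unique hL
    rw [(key x y).1] at this
    linarith [this]
  -- ODEs for a and b
  have hA' : ∀ x : ℝ, deriv (fun x => u x 0) x = -k * u x 0 := by
    intro x
    have h := hAB x (Real.pi / k)
    have hkp : k * (Real.pi / k) = Real.pi := by field_simp
    rw [hkp, Real.cos_pi, Real.sin_pi] at h
    field_simp at h
    linarith [h]
  have hB' : ∀ x : ℝ, deriv (fun x => v x 0) x = -k * v x 0 := by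
    intro x
    have h := hAB x (Real.pi / (2 * k))
    have hkp : k * (Real.pi / (2 * k)) = Real.pi / 2 := by field_simp
    rw [hkp, Real.cos_pi_div_two, Real.sin_pi_div_two, hA' x] at h
    field_simp at h
    linarith [h]
  -- exponential solutions
  have hAexp : ∀ x : ℝ, u x 0 = u 0 0 * Real.exp (-(k * x)) := by
    have hg : ∀ x : ℝ, HasDerivAt (fun x => u x 0 * Real.exp (k * x)) 0 x := by
      intro x
      have hky : HasDerivAt (fun x : ℝ => k * x) k x := by
        simpa using (hasDerivAt_id x).const_mul k
      have hder := (hA x).hasDerivAt.mul hky.exp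
      have h0 : deriv (fun x => u x 0) x * Real.exp (k * x)
          + u x 0 * (Real.exp (k * x) * k) = 0 := by rw [hA' x]; ring
      rw [h0] at hder; exact hder
    intro x
    have h := const' hg x
    simp only [mul_zero, Real.exp_zero, mul_one] at h
    rw [Real.exp_neg]
    field_simp
    linarith [h]
  have hBexp : ∀ x : ℝ, v x 0 = v 0 0 * Real.exp (-(k * x)) := by
    have hg : ∀ x : ℝ, HasDerivAt (fun x => v x 0 * Real.exp (k * x)) 0 x := by
      intro x
      have hky : HasDerivAt (fun x : ℝ => k * x) k x := by
        simpa using (hasDerivAt_id x).const_mul k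
      have hder := (hB x).hasDerivAt.mul hky.exp
      have h0 : deriv (fun x => v x 0) x * Real.exp (k * x)
          + v x 0 * (Real.exp (k * x) * k) = 0 := by rw [hB' x]; ring
      rw [h0] at hder; exact hder
    intro x
    have h := const' hg x
    simp only [mul_zero, Real.exp_zero, mul_one] at h
    rw [Real.exp_neg]
    field_simp
    linarith [h]
  -- Step E: integrate in x along y = 0
  have hF0 : ∀ x : ℝ, F (x, 0) = F (0, 0) + (u 0 0 / k) * (1 - Real.exp (-(k * x))) := by
    have hg : ∀ x : ℝ, HasDerivAt (fun x => F (x, 0) + (u 0 0 / k) * Real.exp (-(k * x))) 0 x := by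
      intro x
      have hky : HasDerivAt (fun x : ℝ => -(k * x)) (-k) x := by
        simpa [Pi.neg_def] using ((hasDerivAt_id x).const_mul k).neg
      have hder := (hx x 0).add ((hky.exp).const_mul (u 0 0 / k))
      have h0 : u x 0 + (u 0 0 / k) * (Real.exp (-(k * x)) * -k) = 0 := by
        rw [hAexp x]; field_simp; ring
      rw [h0] at hder; exact hder
    intro x
    have h := const' hg x
    simp only [mul_zero, neg_zero, Real.exp_zero, mul_one] at h
    linarith [h]
  -- assemble
  obtain ⟨C₁, l, hcl, hsl⟩ := polar' (-(u 0 0 / k)) (-(v 0 0 / k))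
  refine ⟨Set.univ, isOpen_univ, trivial, C₁, F (0, 0) + u 0 0 / k, l, ?_⟩
  rintro ⟨x, y⟩ -
  rw [show ((x, y) : ℝ × ℝ).1 = x from rfl, show ((x, y) : ℝ × ℝ).2 = y from rfl]
  rw [hFy x y, hF0 x, hAexp x, hBexp x, Real.cos_add]
  linear_combination (-(Real.exp (-(k * x)) * Real.cos (k * y))) * hcl
    + (Real.exp (-(k * x)) * Real.sin (k * y)) * hsl
end
end

section
/- Let k ≠ 0 be a real number, let I, J ⊆ ℝ be nonempty open intervals with J nondegenerate, and let F : I × J → ℝ be a C² function. Suppose there is a differentiable function φ : I → ℝ such that F_x(x,y) = φ(x) cos ky and F_y(x,y) = φ(x) sin ky for all (x,y) ∈ I × J. Then there exist real constants C₁ and C₂ such that φ(x) = −k C₁ e^{−kx} and F(x,y) = C₁ e^{−kx} cos ky + C₂ on I × J. -/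
/-!
Integrating `F_y = φ(x) sin ky` in `y` shows that `F(x, y) + φ(x) cos ky / k` does not depend on
`y`. Comparing two values of `y` at which `cos ky` differs expresses `φ` linearly through `F`, so
`φ` is differentiable, and `F_x = φ(x) cos ky` then forces `φ' = -kφ`, i.e. `φ = -k C₁ e^{-kx}`.
Finally `F - C₁ e^{-kx} cos ky` has vanishing partial derivatives on the convex set `I × J`.
-/

open Real Set Filter Topology

theorem Convex.eq_of_hasDerivAt_zero {E : Type*} [NormedAddCommGroup E] [NormedSpace ℝ E]
    {s : Set ℝ} (hs : Convex ℝ s) {f : ℝ → E} (hf : ∀ x ∈ s, HasDerivAt f 0 x)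
    {a b : ℝ} (ha : a ∈ s) (hb : b ∈ s) : f a = f b := by
  have := hs.norm_image_sub_le_of_norm_hasDerivWithin_le (f' := fun _ => 0) (C := 0)
    (fun x hx => (hf x hx).hasDerivWithinAt) (fun _ _ => norm_zero.le) ha hb
  rwa [zero_mul, norm_le_zero_iff, sub_eq_zero, eq_comm] at this

theorem Convex.eq_of_hasDerivAt_partial_zero {E : Type*} [NormedAddCommGroup E]
    [NormedSpace ℝ E] {I J : Set ℝ} (hI : Convex ℝ I) (hJ : Convex ℝ J) {G : ℝ × ℝ → E}
    (hGx : ∀ x ∈ I, ∀ y ∈ J, HasDerivAt (fun s => G (s, y)) 0 x)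
    (hGy : ∀ x ∈ I, ∀ y ∈ J, HasDerivAt (fun t => G (x, t)) 0 y)
    {x x' y y' : ℝ} (hx : x ∈ I) (hx' : x' ∈ I) (hy : y ∈ J) (hy' : y' ∈ J) :
    G (x, y) = G (x', y') :=
  (hJ.eq_of_hasDerivAt_zero (hGy x hx) hy hy').trans
    (hI.eq_of_hasDerivAt_zero (fun s hs => hGx s hs y' hy') hx hx')

theorem Convex.exists_eq_mul_exp_of_hasDerivAt {s : Set ℝ} (hs : Convex ℝ s) (hne : s.Nonempty)
    {c : ℝ} {f : ℝ → ℝ} (hf : ∀ x ∈ s, HasDerivAt f (c * f x) x) :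
    ∃ A, ∀ x ∈ s, f x = A * exp (c * x) := by
  obtain ⟨x₀, hx₀⟩ := hne
  refine ⟨f x₀ * exp (-(c * x₀)), fun x hx => ?_⟩
  have hconst : f x * exp (-(c * x)) = f x₀ * exp (-(c * x₀)) := by
    refine hs.eq_of_hasDerivAt_zero (f := fun x => f x * exp (-(c * x))) (fun t ht => ?_) hx hx₀
    exact ((hf t ht).mul ((hasDerivAt_id' t).const_mul c).neg.exp).congr_deriv (by ring)
  rw [← hconst, mul_assoc, ← exp_add, neg_add_cancel, exp_zero, mul_one]

theorem Set.OrdConnected.exists_cos_mul_ne {k : ℝ} (hk : k ≠ 0) {J : Set ℝ}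
    (hJ : J.OrdConnected) {y₁ y₂ : ℝ} (hy₁ : y₁ ∈ J) (hy₂ : y₂ ∈ J) (hne : y₁ ≠ y₂) :
    ∃ y₃ ∈ J, ∃ y₄ ∈ J, cos (k * y₃) ≠ cos (k * y₄) := by
  by_contra! hconst
  obtain ⟨t, ht⟩ := nonempty_Ioo.mpr (min_lt_max.mpr hne)
  have hIoo : Ioo (min y₁ y₂) (max y₁ y₂) ⊆ J :=
    Ioo_subset_Icc_self.trans (hJ.uIcc_subset hy₁ hy₂)
  -- identity theorem: analytic and constant near `t`, hence constant on all of `ℝ`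
  have hcos : (fun y => cos (k * y)) = fun _ => cos (k * y₁) := by
    refine AnalyticOnNhd.eq_of_eventuallyEq (z₀ := t) (fun y _ => ?_)
      (analyticOnNhd_const (𝕜 := ℝ)) ?_
    · exact analyticAt_cos.comp (analyticAt_const.mul analyticAt_id)
    · filter_upwards [isOpen_Ioo.mem_nhds ht] with y hy using hconst y (hIoo hy) y₁ hy₁
  have h0 := congrFun hcos 0
  have hπ := congrFun hcos (π / k)
  rw [mul_div_cancel₀ π hk, cos_pi] at hπ
  rw [mul_zero, cos_zero] at h0
  linarith

theorem add_mul_cos_div_eq_of_hasDerivAt {k a : ℝ} (hk : k ≠ 0) {J : Set ℝ} (hJ : Convex ℝ J)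
    {f : ℝ → ℝ} (hf : ∀ y ∈ J, HasDerivAt f (a * sin (k * y)) y) {y y' : ℝ} (hy : y ∈ J)
    (hy' : y' ∈ J) : f y + a * cos (k * y) / k = f y' + a * cos (k * y') / k :=
  hJ.eq_of_hasDerivAt_zero (f := fun t => f t + a * cos (k * t) / k) (fun t ht =>
    ((hf t ht).add ((((hasDerivAt_id' t).const_mul k).cos.const_mul a).div_const k)).congr_deriv
      (by field_simp; ring)) hy hy'

section Partials

variable {k : ℝ} {I J : Set ℝ} {F : ℝ × ℝ → ℝ} {φ : ℝ → ℝ}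

theorem hasDerivAt_neg_mul_of_hasDerivAt_partials (hk : k ≠ 0) (hI : IsOpen I)
    (hJ : Convex ℝ J)
    (hFx : ∀ x ∈ I, ∀ y ∈ J, HasDerivAt (fun s => F (s, y)) (φ x * cos (k * y)) x)
    (hFy : ∀ x ∈ I, ∀ y ∈ J, HasDerivAt (fun t => F (x, t)) (φ x * sin (k * y)) y)
    {y₁ y₂ : ℝ} (hy₁ : y₁ ∈ J) (hy₂ : y₂ ∈ J) (hcos : cos (k * y₁) ≠ cos (k * y₂)) :
    ∀ x ∈ I, HasDerivAt φ (-k * φ x) x := by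
  have hd : cos (k * y₁) - cos (k * y₂) ≠ 0 := sub_ne_zero.mpr hcos
  have hφ : ∀ x' ∈ I, φ x' = k * (F (x', y₂) - F (x', y₁)) / (cos (k * y₁) - cos (k * y₂)) := by
    intro x' hx'
    have := add_mul_cos_div_eq_of_hasDerivAt hk hJ (hFy x' hx') hy₁ hy₂
    rw [eq_div_iff hd]
    field_simp at this
    linear_combination this
  intro x hx
  have hquot := (((hFx x hx y₂ hy₂).sub (hFx x hx y₁ hy₁)).const_mul k).div_const
    (cos (k * y₁) - cos (k * y₂))
  refine (hquot.congr_deriv ?_).congr_of_eventuallyEq ?_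
  · field_simp
    ring
  · filter_upwards [hI.mem_nhds hx] with x' hx' using hφ x' hx'

theorem exists_eq_mul_exp_mul_cos_add_of_hasDerivAt_partials (hI : Convex ℝ I)
    (hJ : Convex ℝ J)
    (hFx : ∀ x ∈ I, ∀ y ∈ J, HasDerivAt (fun s => F (s, y)) (φ x * cos (k * y)) x)
    (hFy : ∀ x ∈ I, ∀ y ∈ J, HasDerivAt (fun t => F (x, t)) (φ x * sin (k * y)) y)
    {C₁ : ℝ} (hφ : ∀ x ∈ I, φ x = -k * C₁ * exp (-(k * x))) {x₀ y₀ : ℝ} (hx₀ : x₀ ∈ I)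
    (hy₀ : y₀ ∈ J) :
    ∃ C₂, ∀ x ∈ I, ∀ y ∈ J, F (x, y) = C₁ * exp (-(k * x)) * cos (k * y) + C₂ := by
  set G : ℝ × ℝ → ℝ := fun p => F p - C₁ * exp (-(k * p.1)) * cos (k * p.2)
  refine ⟨G (x₀, y₀), fun x hx y hy => ?_⟩
  rw [← hI.eq_of_hasDerivAt_partial_zero hJ (G := G) (fun x hx y hy => ?_) (fun x hx y hy => ?_)
    hx hx₀ hy hy₀]
  · ring
  · show HasDerivAt (fun s => F (s, y) - C₁ * exp (-(k * s)) * cos (k * y)) 0 x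
    have hexp := (((hasDerivAt_id' x).const_mul k).neg.exp.const_mul C₁).mul_const (cos (k * y))
    refine ((hFx x hx y hy).sub hexp).congr_deriv ?_
    rw [hφ x hx, Pi.neg_apply]
    ring
  · show HasDerivAt (fun t => F (x, t) - C₁ * exp (-(k * x)) * cos (k * t)) 0 y
    refine ((hFy x hx y hy).sub
      (((hasDerivAt_id' y).const_mul k).cos.const_mul (C₁ * exp (-(k * x))))).congr_deriv ?_
    rw [hφ x hx]
    ring

end Partials

theorem stmt_18_general (k : ℝ) (hk : k ≠ 0)
    (I J : Set ℝ) (hIopen : IsOpen I) (hIint : I.OrdConnected) (hIne : I.Nonempty)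
    (hJopen : IsOpen J) (hJint : J.OrdConnected)
    (hJnd : ∃ y₁ ∈ J, ∃ y₂ ∈ J, y₁ ≠ y₂)
    (F : ℝ × ℝ → ℝ) (hF : ContDiffOn ℝ 2 F (I ×ˢ J))
    (φ : ℝ → ℝ)
    (hFx : ∀ x ∈ I, ∀ y ∈ J,
      deriv (fun s => F (s, y)) x = φ x * Real.cos (k * y))
    (hFy : ∀ x ∈ I, ∀ y ∈ J,
      deriv (fun t => F (x, t)) y = φ x * Real.sin (k * y)) :
    ∃ C₁ C₂ : ℝ,
      (∀ x ∈ I, φ x = -k * C₁ * Real.exp (-(k * x))) ∧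
      (∀ x ∈ I, ∀ y ∈ J, F (x, y) = C₁ * Real.exp (-(k * x)) * Real.cos (k * y) + C₂) := by
  obtain ⟨y₁, hy₁, y₂, hy₂, hne⟩ := hJnd
  have hFd : ∀ x ∈ I, ∀ y ∈ J, DifferentiableAt ℝ F (x, y) := fun x hx y hy =>
    (hF.differentiableOn two_ne_zero).differentiableAt ((hIopen.prod hJopen).mem_nhds ⟨hx, hy⟩)
  have hFx' : ∀ x ∈ I, ∀ y ∈ J, HasDerivAt (fun s => F (s, y)) (φ x * cos (k * y)) x :=
    fun x hx y hy => hFx x hx y hy ▸ ((hFd x hx y hy).comp x (by fun_prop)).hasDerivAt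
  have hFy' : ∀ x ∈ I, ∀ y ∈ J, HasDerivAt (fun t => F (x, t)) (φ x * sin (k * y)) y :=
    fun x hx y hy => hFy x hx y hy ▸ ((hFd x hx y hy).comp y (by fun_prop)).hasDerivAt
  obtain ⟨y₃, hy₃, y₄, hy₄, hcos⟩ := hJint.exists_cos_mul_ne hk hy₁ hy₂ hne
  obtain ⟨A, hA⟩ := hIint.convex.exists_eq_mul_exp_of_hasDerivAt hIne
    (hasDerivAt_neg_mul_of_hasDerivAt_partials hk hIopen hJint.convex hFx' hFy' hy₃ hy₄ hcos)
  have hφ : ∀ x ∈ I, φ x = -k * (-A / k) * exp (-(k * x)) := fun x hx => by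
    rw [hA x hx, neg_mul]
    field_simp
  obtain ⟨x₀, hx₀⟩ := hIne
  obtain ⟨C₂, hC₂⟩ := exists_eq_mul_exp_mul_cos_add_of_hasDerivAt_partials hIint.convex
    hJint.convex hFx' hFy' hφ hx₀ hy₁
  exact ⟨-A / k, C₂, hφ, hC₂⟩

/-- If `F` is C² on `I × J` (with `I` a nonempty open interval and `J` a nondegenerate
open interval) and there is a differentiable `φ` on `I` with `F_x = φ(x) cos ky` and
`F_y = φ(x) sin ky`, `k ≠ 0`, then `φ(x) = −k C₁ e^{−kx}` and
`F(x,y) = C₁ e^{−kx} cos ky + C₂` for some constants `C₁, C₂`. -/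
theorem stmt_18 (k : ℝ) (hk : k ≠ 0)
    (I J : Set ℝ) (hIopen : IsOpen I) (hIint : I.OrdConnected) (hIne : I.Nonempty)
    (hJopen : IsOpen J) (hJint : J.OrdConnected)
    (hJnd : ∃ y₁ ∈ J, ∃ y₂ ∈ J, y₁ ≠ y₂)
    (F : ℝ × ℝ → ℝ) (hF : ContDiffOn ℝ 2 F (I ×ˢ J))
    (φ : ℝ → ℝ) (hφ : DifferentiableOn ℝ φ I)
    (hFx : ∀ x ∈ I, ∀ y ∈ J,
      deriv (fun s => F (s, y)) x = φ x * Real.cos (k * y))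
    (hFy : ∀ x ∈ I, ∀ y ∈ J,
      deriv (fun t => F (x, t)) y = φ x * Real.sin (k * y)) :
    ∃ C₁ C₂ : ℝ,
      (∀ x ∈ I, φ x = -k * C₁ * Real.exp (-(k * x))) ∧
      (∀ x ∈ I, ∀ y ∈ J, F (x, y) = C₁ * Real.exp (-(k * x)) * Real.cos (k * y) + C₂) :=
  stmt_18_general k hk I J hIopen hIint hIne hJopen hJint hJnd F hF φ hFx hFy
end
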